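/- Let E be a real Banach space, let f : E → E be three times continuously differentiable (ContDiff ℝ 3), let x : ℝ → E satisfy the autonomous ordinary differential equation x'(t) = f(x(t)) for all t (i.e., HasDerivAt x (f (x t)) t for every t ∈ ℝ), and let t₀ ∈ ℝ. Define, for step size h, the stages k₁ = f(x(t₀)), k₂ = f(x(t₀) + h • k₁), k₃ = f(x(t₀) + (h/4) • (k₁ + k₂)). Then the local error of one step of the three-stage Runge–Kutta scheme with update x(t₀) + h • ((1/6) k₁ + (1/6) k₂ + (2/3) k₃) is of order four in the step size: the function h ↦ x(t₀ + h) − x(t₀) − h • ((1/6) k₁ + (1/6) k₂ + (2/3) k₃) is O(h⁴) as h → 0 (big-O with respect to the filter of neighborhoods of 0 in ℝ). -/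

import Mathlib

open Asymptotics Filter Topology

/-! By the Leibniz rule the error `e(h) = y(h) - y(0) - h • Φ(h)` of a one-step method with
increment `Φ` satisfies `e⁽ᵏ⁺¹⁾(0) = y⁽ᵏ⁺¹⁾(0) - (k + 1) • Φ⁽ᵏ⁾(0)`. If these vanish for
`k ≤ 2`, then `e'''(h) = O(h)`, and three applications of the mean value inequality give
`e(h) = O(h⁴)`. For the exact solution, `y' = f(y)`, `y'' = f'(y) f(y)` and
`y''' = f''(y)(f(y), f(y)) + f'(y) f'(y) f(y)`; every stage of the scheme has the form
`f(y₀ + h • S(h))`, and Faà di Bruno's formula at `h = 0` gives `Φ'(0) = y''(0) / 2` and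
`Φ''(0) = y'''(0) / 3`. -/

section

variable {E : Type*} [NormedAddCommGroup E] [NormedSpace ℝ E]

theorem isBigO_pow_succ_of_hasDerivAt {g g' : ℝ → E} {n : ℕ}
    (hg : ∀ᶠ t in 𝓝 0, HasDerivAt g (g' t) t) (hg' : g' =O[𝓝 0] (· ^ n)) :
    (fun t => g t - g 0) =O[𝓝 0] (· ^ (n + 1)) := by
  obtain ⟨c, hc₀, hc⟩ := hg'.exists_nonneg
  have hseg := (convex_univ (𝕜 := ℝ)).eventually_nhdsWithin_segment (Set.mem_univ 0)
    ((nhdsWithin_univ (0 : ℝ)).symm ▸ hg.and (isBigOWith_iff.1 hc))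
  rw [nhdsWithin_univ] at hseg
  refine IsBigOWith.isBigO (c := c) (isBigOWith_iff.2 ?_)
  filter_upwards [hseg] with t ht
  have hbound : ∀ s ∈ segment ℝ 0 t, ‖g' s‖ ≤ c * ‖t‖ ^ n := fun s hs => by
    have hst : ‖s‖ ≤ ‖t‖ := by simpa using norm_sub_le_of_mem_segment hs
    calc ‖g' s‖ ≤ c * ‖s ^ n‖ := (ht s hs).2
      _ ≤ c * ‖t‖ ^ n := by rw [norm_pow]; gcongr
  have := (convex_segment 0 t).norm_image_sub_le_of_norm_hasDerivWithin_le
    (fun s hs => (ht s hs).1.hasDerivWithinAt) hbound (left_mem_segment ℝ 0 t)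
    (right_mem_segment ℝ 0 t)
  simpa [norm_pow, pow_succ, mul_assoc] using this

theorem isBigO_pow_add_of_iteratedDeriv_eq_zero {g : ℝ → E} {n m : ℕ} (hg : ContDiff ℝ n g)
    (hg₀ : ∀ k < n, iteratedDeriv k g 0 = 0) (hgn : iteratedDeriv n g =O[𝓝 0] (· ^ m)) :
    g =O[𝓝 0] (· ^ (n + m)) := by
  induction n generalizing g with
  | zero => simpa using hgn
  | succ n ih =>
    rw [Nat.cast_succ, contDiff_succ_iff_deriv] at hg
    have hderiv : deriv g =O[𝓝 0] (· ^ (n + m)) :=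
      ih hg.2.2 (fun k hk => by simpa [← iteratedDeriv_succ'] using hg₀ (k + 1) (by omega))
        (by simpa [← iteratedDeriv_succ'] using hgn)
    have hg0 : g 0 = 0 := by simpa using hg₀ 0 n.succ_pos
    simpa [hg0, add_right_comm] using
      isBigO_pow_succ_of_hasDerivAt (.of_forall fun t => (hg.1 t).hasDerivAt) hderiv

theorem iteratedDeriv_succ_id_smul {Φ : ℝ → E} {n : ℕ} {t : ℝ}
    (hΦ : ContDiffAt ℝ (n + 1) Φ t) :
    iteratedDeriv (n + 1) (fun s => s • Φ s) t =
      (n + 1 : ℝ) • iteratedDeriv n Φ t + t • iteratedDeriv (n + 1) Φ t := by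
  have := iteratedDerivWithin_smul (Set.mem_univ t) uniqueDiffOn_univ
    (f := fun s : ℝ => s) contDiffAt_id.contDiffWithinAt hΦ.contDiffWithinAt
  simp only [iteratedDerivWithin_univ] at this
  rw [show (fun s => s • Φ s) = (fun s : ℝ => s) • Φ from rfl, this, Finset.sum_range_succ',
    Finset.sum_range_succ']
  simp [iteratedDeriv_fun_id, ← Nat.cast_smul_eq_nsmul ℝ]

theorem isBigO_sub_sub_smul_of_iteratedDeriv {y Φ : ℝ → E} {n : ℕ} (hy : ContDiff ℝ (n + 2) y)
    (hΦ : ContDiff ℝ (n + 1) Φ)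
    (hyΦ : ∀ k ≤ n, iteratedDeriv (k + 1) y 0 = (k + 1 : ℝ) • iteratedDeriv k Φ 0) :
    (fun t => y t - y 0 - t • Φ t) =O[𝓝 0] (· ^ (n + 2)) := by
  have hderiv : ∀ k ≤ n, ∀ t, iteratedDeriv (k + 1) (fun t => y t - y 0 - t • Φ t) t =
      iteratedDeriv (k + 1) y t -
        ((k + 1 : ℝ) • iteratedDeriv k Φ t + t • iteratedDeriv (k + 1) Φ t) := by
    intro k hk t
    have hyk : ContDiff ℝ (k + 1) y := hy.of_le (by norm_cast; omega)
    have hΦk : ContDiff ℝ (k + 1) Φ := hΦ.of_le (by norm_cast; omega)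
    rw [iteratedDeriv_fun_sub, iteratedDeriv_fun_sub, iteratedDeriv_succ_id_smul]
    · simp [iteratedDeriv_const]
    all_goals push_cast; fun_prop
  have hlead : (fun t => iteratedDeriv (n + 1) y t - (n + 1 : ℝ) • iteratedDeriv n Φ t)
      =O[𝓝 0] (· ^ 1) := by
    have hdiff : DifferentiableAt ℝ
        (fun t => iteratedDeriv (n + 1) y t - (n + 1 : ℝ) • iteratedDeriv n Φ t) 0 :=
      ((hy.differentiable_iteratedDeriv' (n + 1)).sub
        ((hΦ.differentiable_iteratedDeriv' n).const_smul _)) 0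
    simpa [hyΦ n le_rfl] using hdiff.hasFDerivAt.isBigO_sub
  have hrem : (fun t : ℝ => t • iteratedDeriv (n + 1) Φ t) =O[𝓝 0] (· ^ 1) := by
    have hbdd := ((hΦ.continuous_iteratedDeriv' (n + 1)).tendsto 0).isBigO_one ℝ
    simpa using (isBigO_refl (fun t : ℝ => t) (𝓝 0)).smul hbdd
  refine isBigO_pow_add_of_iteratedDeriv_eq_zero (n := n + 1) (m := 1)
    ((hy.of_le (by norm_cast; omega)).sub contDiff_const |>.sub (contDiff_id.smul hΦ)) ?_ ?_
  · rintro (_ | k) hk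
    · simp
    · simp [hderiv k (by omega), hyΦ k (by omega)]
  · simpa only [funext (hderiv n le_rfl), sub_add_eq_sub_sub] using hlead.sub hrem

section Solution

variable {f : E → E} {x : ℝ → E}

theorem contDiff_succ_of_hasDerivAt_comp {n : ℕ} (hf : ContDiff ℝ n f)
    (hx : ∀ t, HasDerivAt x (f (x t)) t) : ContDiff ℝ (n + 1) x := by
  have hderiv : deriv x = f ∘ x := funext fun t => (hx t).deriv
  have hdiff : Differentiable ℝ x := fun t => (hx t).differentiableAt
  induction n with
  | zero =>
    rw [Nat.cast_zero, zero_add, contDiff_one_iff_deriv, hderiv]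
    exact ⟨hdiff, (contDiff_zero.1 hf).comp hdiff.continuous⟩
  | succ n ih =>
    rw [contDiff_succ_iff_deriv, hderiv]
    exact ⟨hdiff, by simp, hf.comp (ih (hf.of_le (by norm_cast; omega)))⟩

theorem iteratedDeriv_two_of_hasDerivAt_comp (hx : ∀ t, HasDerivAt x (f (x t)) t) {t : ℝ}
    (hf : DifferentiableAt ℝ f (x t)) :
    iteratedDeriv 2 x t = fderiv ℝ f (x t) (f (x t)) := by
  have hderiv : deriv x = f ∘ x := funext fun t => (hx t).deriv
  rw [iteratedDeriv_succ', iteratedDeriv_one, hderiv,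
    fderiv_comp_deriv _ hf (hx t).differentiableAt, hderiv]
  rfl

theorem iteratedDeriv_three_of_hasDerivAt_comp (hf : ContDiff ℝ 2 f)
    (hx : ∀ t, HasDerivAt x (f (x t)) t) (t : ℝ) :
    iteratedDeriv 3 x t = iteratedFDeriv ℝ 2 f (x t) (fun _ => f (x t)) +
      fderiv ℝ f (x t) (fderiv ℝ f (x t) (f (x t))) := by
  have hderiv : deriv x = f ∘ x := funext fun t => (hx t).deriv
  have hx2 : ContDiff ℝ 2 x :=
    contDiff_succ_of_hasDerivAt_comp (n := 1) (hf.of_le (by norm_num)) hx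
  rw [iteratedDeriv_succ', hderiv, iteratedDeriv_vcomp_two hf.contDiffAt hx2.contDiffAt,
    iteratedDeriv_two_of_hasDerivAt_comp hx (hf.differentiable two_ne_zero _), (hx t).deriv]

end Solution

section Stage

variable {f : E → E} {y : E} {S : ℝ → E}

theorem iteratedDeriv_succ_const_add_smul_zero {k : ℕ} (hS : ContDiffAt ℝ (k + 1) S 0) :
    iteratedDeriv (k + 1) (fun t => y + t • S t) 0 = (k + 1 : ℝ) • iteratedDeriv k S 0 := by
  rw [iteratedDeriv_const_add k.succ_pos, iteratedDeriv_succ_id_smul hS, zero_smul, add_zero]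

theorem deriv_comp_const_add_smul_zero (hf : DifferentiableAt ℝ f y) (hS : ContDiffAt ℝ 1 S 0) :
    deriv (fun t => f (y + t • S t)) 0 = fderiv ℝ f y (S 0) := by
  have := iteratedDeriv_succ_const_add_smul_zero (y := y) (k := 0) (by simpa using hS)
  simp only [iteratedDeriv_one, iteratedDeriv_zero, CharP.cast_eq_zero, zero_add, one_smul] at this
  rw [← Function.comp_def f, fderiv_comp_deriv _ (by simpa using hf)
    (by have := hS.differentiableAt one_ne_zero; fun_prop), this]
  simp

theorem iteratedDeriv_two_comp_const_add_smul_zero (hf : ContDiffAt ℝ 2 f y)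
    (hS : ContDiffAt ℝ 2 S 0) :
    iteratedDeriv 2 (fun t => f (y + t • S t)) 0 =
      iteratedFDeriv ℝ 2 f y (fun _ => S 0) + (2 : ℝ) • fderiv ℝ f y (deriv S 0) := by
  have h1 := iteratedDeriv_succ_const_add_smul_zero (y := y) (k := 0) (hS.of_le (by norm_num))
  have h2 := iteratedDeriv_succ_const_add_smul_zero (y := y) (k := 1) hS
  simp only [iteratedDeriv_one, iteratedDeriv_zero, CharP.cast_eq_zero, zero_add, one_smul]
    at h1 h2
  rw [← Function.comp_def f, iteratedDeriv_vcomp_two (by simpa using hf) (by fun_prop), h1, h2]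
  norm_num

end Stage

section Increment

-- The discrete flow of the scheme is `y ↦ y + h • rk3Increment f y h`.
noncomputable def rk3Increment (f : E → E) (y : E) (h : ℝ) : E :=
  (1 / 6 : ℝ) • f y + (1 / 6 : ℝ) • f (y + h • f y) +
    (2 / 3 : ℝ) • f (y + (h / 4) • (f y + f (y + h • f y)))

variable {f : E → E} {y : E}

theorem contDiff_rk3Increment {n : WithTop ℕ∞} (hf : ContDiff ℝ n f) :
    ContDiff ℝ n (rk3Increment f y) := by
  unfold rk3Increment
  fun_prop

theorem rk3Increment_zero : rk3Increment f y 0 = f y := by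
  simp only [rk3Increment, zero_smul, add_zero, zero_div]
  module

theorem iteratedDeriv_rk3Increment_zero {k : ℕ} (hk : k ≠ 0) (hf : ContDiff ℝ k f) :
    iteratedDeriv k (rk3Increment f y) 0 =
      (1 / 6 : ℝ) • iteratedDeriv k (fun h : ℝ => f (y + h • f y)) 0 +
      (2 / 3 : ℝ) •
        iteratedDeriv k (fun h : ℝ => f (y + h • ((1 / 4 : ℝ) • (f y + f (y + h • f y))))) 0 := by
  have hstage : (fun h : ℝ => f (y + (h / 4) • (f y + f (y + h • f y)))) =
      fun h => f (y + h • ((1 / 4 : ℝ) • (f y + f (y + h • f y)))) := by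
    funext h
    rw [smul_smul, div_eq_mul_one_div]
  unfold rk3Increment
  rw [iteratedDeriv_fun_add, iteratedDeriv_fun_add, iteratedDeriv_const, if_neg hk, zero_add,
    iteratedDeriv_fun_const_smul, iteratedDeriv_fun_const_smul, hstage]
  all_goals fun_prop

theorem deriv_rk3Increment_zero (hf : ContDiff ℝ 1 f) :
    deriv (rk3Increment f y) 0 = (1 / 2 : ℝ) • fderiv ℝ f y (f y) := by
  have hf' := hf.differentiable one_ne_zero y
  rw [← iteratedDeriv_one, iteratedDeriv_rk3Increment_zero one_ne_zero (by simpa using hf),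
    iteratedDeriv_one, iteratedDeriv_one, deriv_comp_const_add_smul_zero hf' contDiffAt_const,
    deriv_comp_const_add_smul_zero hf' (by fun_prop)]
  simp only [zero_smul, add_zero, map_smul, map_add]
  module

theorem iteratedDeriv_two_rk3Increment_zero (hf : ContDiff ℝ 2 f) :
    iteratedDeriv 2 (rk3Increment f y) 0 =
      (1 / 3 : ℝ) •
        (iteratedFDeriv ℝ 2 f y (fun _ => f y) + fderiv ℝ f y (fderiv ℝ f y (f y))) := by
  have hf1 : ContDiff ℝ 1 f := hf.of_le (by norm_num)
  have hderiv_stage : deriv (fun h : ℝ => (1 / 4 : ℝ) • (f y + f (y + h • f y))) 0 =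
      (1 / 4 : ℝ) • fderiv ℝ f y (f y) := by
    have hf' := hf1.differentiable one_ne_zero
    rw [deriv_fun_const_smul, deriv_const_add,
      deriv_comp_const_add_smul_zero (hf' y) contDiffAt_const]
    fun_prop
  have hquad : iteratedFDeriv ℝ 2 f y (fun _ => (1 / 4 : ℝ) • (f y + f y)) =
      (1 / 4 : ℝ) • iteratedFDeriv ℝ 2 f y (fun _ => f y) := by
    rw [show (1 / 4 : ℝ) • (f y + f y) = (1 / 2 : ℝ) • f y by module,
      (iteratedFDeriv ℝ 2 f y).map_smul_univ (fun _ => (1 / 2 : ℝ)) (fun _ => f y)]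
    norm_num
  rw [iteratedDeriv_rk3Increment_zero two_ne_zero (by simpa using hf),
    iteratedDeriv_two_comp_const_add_smul_zero hf.contDiffAt contDiffAt_const,
    iteratedDeriv_two_comp_const_add_smul_zero hf.contDiffAt (by fun_prop), hderiv_stage]
  simp only [deriv_const, map_zero, smul_zero, add_zero, zero_smul, hquad, map_smul]
  module

end Increment

end

theorem rk3_local_error_isBigO_fourth_general
    {E : Type*} [NormedAddCommGroup E] [NormedSpace ℝ E]
    (f : E → E) (hf : ContDiff ℝ 3 f)
    (x : ℝ → E) (hx : ∀ t : ℝ, HasDerivAt x (f (x t)) t) (t₀ : ℝ) :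
    (fun h : ℝ =>
        x (t₀ + h) - x t₀ -
          h • ((1 / 6 : ℝ) • f (x t₀) +
               (1 / 6 : ℝ) • f (x t₀ + h • f (x t₀)) +
               (2 / 3 : ℝ) • f (x t₀ +
                 (h / 4) • (f (x t₀) + f (x t₀ + h • f (x t₀))))))
      =O[nhds (0 : ℝ)] fun h : ℝ => h ^ 4 := by
  set y : ℝ → E := fun h => x (t₀ + h)
  have hy : ∀ h, HasDerivAt y (f (y h)) h := fun h => (hx (t₀ + h)).comp_const_add t₀ h
  have hf₂ : ContDiff ℝ 2 f := hf.of_le (by norm_num)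
  have hyΦ : ∀ k ≤ 2, iteratedDeriv (k + 1) y 0 =
      (k + 1 : ℝ) • iteratedDeriv k (rk3Increment f (y 0)) 0 := by
    intro k hk
    interval_cases k
    · simp [(hy 0).deriv, rk3Increment_zero]
    · rw [iteratedDeriv_two_of_hasDerivAt_comp hy (hf₂.differentiable two_ne_zero _),
        iteratedDeriv_one, deriv_rk3Increment_zero (hf₂.of_le one_le_two)]
      module
    · rw [iteratedDeriv_three_of_hasDerivAt_comp hf₂ hy, iteratedDeriv_two_rk3Increment_zero hf₂]
      module
  simpa [y, rk3Increment] using isBigO_sub_sub_smul_of_iteratedDeriv (n := 2)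
    (contDiff_succ_of_hasDerivAt_comp hf hy) (contDiff_rk3Increment hf) hyΦ

/-- The local error of one step of the three-stage third-order explicit
Runge–Kutta scheme `k₁ = f(x), k₂ = f(x + h k₁), k₃ = f(x + (h/4)(k₁+k₂))`,
`Φ(x) = x + h (k₁/6 + k₂/6 + 2 k₃/3)`, applied to the autonomous ODE
`x' = f(x)` with `f` three times continuously differentiable, is of order
four in the step size. -/
theorem rk3_local_error_isBigO_fourth
    {E : Type*} [NormedAddCommGroup E] [NormedSpace ℝ E] [CompleteSpace E]
    (f : E → E) (hf : ContDiff ℝ 3 f)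
    (x : ℝ → E) (hx : ∀ t : ℝ, HasDerivAt x (f (x t)) t) (t₀ : ℝ) :
    (fun h : ℝ =>
        x (t₀ + h) - x t₀ -
          h • ((1 / 6 : ℝ) • f (x t₀) +
               (1 / 6 : ℝ) • f (x t₀ + h • f (x t₀)) +
               (2 / 3 : ℝ) • f (x t₀ +
                 (h / 4) • (f (x t₀) + f (x t₀ + h • f (x t₀))))))
      =O[nhds (0 : ℝ)] fun h : ℝ => h ^ 4 :=
  rk3_local_error_isBigO_fourth_general f hf x hx t₀
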